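/- arXiv:2011.09541 — 3 statements merged into one kernel-verified Lean document; each statement's English description precedes it below -/
import Mathlib

section
/- Let a ∈ [-1,1] and c₁, c₂, c₃ ∈ R with c₁² + c₂² + c₃² = 1. Then √(1-c₁²)·√(1 - 2a√(1-a²)c₁c₂ - a²c₁² - (1-a²)c₂²) ≥ a(c₁² - 1) + √(1-a²)c₁c₂. -/
/-!
Write `b = √(1 - a²)`, so that `(a, b)` is a unit vector. Using `c₁² + c₂² + c₃² = 1`, the left side
is the inner product of `(c₂, c₃)` with `(b c₁ - a c₂, -a c₃)`, and the radicands on the right are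
`c₂² + c₃²` and `(b c₁ - a c₂)² + c₃²`. Cauchy–Schwarz in the plane, followed by `a² ≤ 1`, concludes.
-/

lemma mul_add_mul_le_sqrt_mul_sqrt (x y p q : ℝ) :
    x * p + y * q ≤ √(x ^ 2 + y ^ 2) * √(p ^ 2 + q ^ 2) := by
  rw [← Real.sqrt_mul (by positivity)]
  calc x * p + y * q ≤ |x * p + y * q| := le_abs_self _
    _ = √((x * p + y * q) ^ 2) := (Real.sqrt_sq_eq_abs _).symm
    _ ≤ _ := Real.sqrt_le_sqrt (by nlinarith [sq_nonneg (x * q - y * p)])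

lemma key_algebraic_inequality_of_sq_add_sq {a b c₁ c₂ c₃ : ℝ} (hab : a ^ 2 + b ^ 2 = 1)
    (hc : c₁ ^ 2 + c₂ ^ 2 + c₃ ^ 2 = 1) :
    a * (c₁ ^ 2 - 1) + b * c₁ * c₂ ≤
      √(1 - c₁ ^ 2) * √(1 - 2 * a * b * c₁ * c₂ - a ^ 2 * c₁ ^ 2 - b ^ 2 * c₂ ^ 2) := by
  have h_lhs : a * (c₁ ^ 2 - 1) + b * c₁ * c₂ = c₂ * (b * c₁ - a * c₂) + c₃ * (-a * c₃) := by
    linear_combination a * hc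
  have h_left_radicand : 1 - c₁ ^ 2 = c₂ ^ 2 + c₃ ^ 2 := by linear_combination -hc
  have h_right_radicand : 1 - 2 * a * b * c₁ * c₂ - a ^ 2 * c₁ ^ 2 - b ^ 2 * c₂ ^ 2
      = (b * c₁ - a * c₂) ^ 2 + c₃ ^ 2 := by
    linear_combination -hc - c₁ ^ 2 * hab - c₂ ^ 2 * hab
  have h_shrink : (-a * c₃) ^ 2 ≤ c₃ ^ 2 := by nlinarith [sq_nonneg b, sq_nonneg c₃]
  rw [h_lhs, h_left_radicand, h_right_radicand]
  calc c₂ * (b * c₁ - a * c₂) + c₃ * (-a * c₃)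
      ≤ √(c₂ ^ 2 + c₃ ^ 2) * √((b * c₁ - a * c₂) ^ 2 + (-a * c₃) ^ 2) :=
        mul_add_mul_le_sqrt_mul_sqrt _ _ _ _
    _ ≤ √(c₂ ^ 2 + c₃ ^ 2) * √((b * c₁ - a * c₂) ^ 2 + c₃ ^ 2) := by gcongr

/-- Key algebraic inequality in the proof of the angle triangle inequality. -/
theorem key_algebraic_inequality
    (a c₁ c₂ c₃ : ℝ) (ha : a ∈ Set.Icc (-1 : ℝ) 1)
    (hc : c₁ ^ 2 + c₂ ^ 2 + c₃ ^ 2 = 1) :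
    a * (c₁ ^ 2 - 1) + Real.sqrt (1 - a ^ 2) * c₁ * c₂ ≤
      Real.sqrt (1 - c₁ ^ 2) *
        Real.sqrt (1 - 2 * a * Real.sqrt (1 - a ^ 2) * c₁ * c₂
          - a ^ 2 * c₁ ^ 2 - (1 - a ^ 2) * c₂ ^ 2) := by
  have hb : √(1 - a ^ 2) ^ 2 = 1 - a ^ 2 :=
    Real.sq_sqrt (by nlinarith [ha.1, ha.2])
  have key := key_algebraic_inequality_of_sq_add_sq (a := a) (b := √(1 - a ^ 2)) (by linarith) hc
  rwa [hb] at key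
end

section
/- Let P: T³ → R^{3×3} be a smooth map valued in symmetric traceless matrices on the flat 3-torus, and let L₁, L₂, L₃ ∈ R. Define the operator ∂G(P)ᵢⱼ := -2L₁ΔPᵢⱼ - 2(L₂+L₃)∂ₖ∂ⱼPᵢₖ + (2/3)(L₂+L₃)∂_ℓ∂ₖP_{kℓ}δᵢⱼ. Then 2(L₁ - |L₂+L₃|)‖ΔP‖²_{L²} ≤ ⟨-∂G(P), ΔP⟩_{L²} ≤ 2(L₁ + |L₂+L₃|)‖ΔP‖²_{L²}. -/
open MeasureTheory

/-- Partial derivative in direction `k` on `ℝ³`. -/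
noncomputable def pd3 (f : (Fin 3 → ℝ) → ℝ) (k : Fin 3) (x : Fin 3 → ℝ) : ℝ :=
  fderiv ℝ f x (Pi.single k 1)

/-- Second partial derivative `∂ₖ∂ₗ f` on `ℝ³`. -/
noncomputable def pd3₂ (f : (Fin 3 → ℝ) → ℝ) (k l : Fin 3) : (Fin 3 → ℝ) → ℝ :=
  pd3 (pd3 f l) k

open Set

abbrev E3 := Fin 3 → ℝ

def Per (f : E3 → ℝ) : Prop := ∀ (x : E3) (k : Fin 3), f (x + Pi.single k 1) = f x

lemma contDiff_pd3 {f : E3 → ℝ} (hf : ContDiff ℝ (↑(⊤:ℕ∞)) f) (k : Fin 3) :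
    ContDiff ℝ (↑(⊤:ℕ∞)) (pd3 f k) := by
  have hf' : ContDiff ℝ (↑(⊤:ℕ∞)) f := hf.of_le (by simp)
  have h1 : ContDiff ℝ (↑(⊤:ℕ∞)) (fderiv ℝ f) := (contDiff_infty_iff_fderiv.mp hf').2
  exact h1.clm_apply contDiff_const

lemma contDiff_pd3₂ {f : E3 → ℝ} (hf : ContDiff ℝ (↑(⊤:ℕ∞)) f) (k l : Fin 3) :
    ContDiff ℝ (↑(⊤:ℕ∞)) (pd3₂ f k l) := contDiff_pd3 (contDiff_pd3 hf l) k

lemma fderiv_shift (f : E3 → ℝ) (hf : ContDiff ℝ (↑(⊤:ℕ∞)) f) (c x : E3) :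
    fderiv ℝ (fun y => f (y + c)) x = fderiv ℝ f (x + c) := by
  have h1 : HasFDerivAt (fun y : E3 => y + c) (ContinuousLinearMap.id ℝ E3) x :=
    (hasFDerivAt_id x).add_const c
  have h2 : HasFDerivAt f (fderiv ℝ f (x + c)) (x + c) :=
    (hf.differentiable (by simp) (x + c)).hasFDerivAt
  have := (h2.comp x h1).fderiv
  simpa [Function.comp_def] using this

lemma per_pd3 {f : E3 → ℝ} (hf : ContDiff ℝ (↑(⊤:ℕ∞)) f) (hp : Per f) (k : Fin 3) :
    Per (pd3 f k) := by
  intro x m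
  unfold pd3
  rw [← fderiv_shift f hf (Pi.single m 1) x]
  congr 1
  apply Filter.EventuallyEq.fderiv_eq
  exact Filter.Eventually.of_forall (fun y => hp y m)

lemma pd3_eq_snd {f : E3 → ℝ} (hf : ContDiff ℝ (↑(⊤:ℕ∞)) f) (k l : Fin 3) (x : E3) :
    pd3₂ f k l x = fderiv ℝ (fderiv ℝ f) x (Pi.single k 1) (Pi.single l 1) := by
  have h1 : ContDiff ℝ (↑(⊤:ℕ∞)) (fderiv ℝ f) := (contDiff_infty_iff_fderiv.mp hf).2
  have hd : DifferentiableAt ℝ (fderiv ℝ f) x :=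
    (h1.differentiable (by simp)) x
  show fderiv ℝ (fun y => fderiv ℝ f y (Pi.single l 1)) x (Pi.single k 1) = _
  rw [fderiv_clm_apply hd (differentiableAt_const _)]
  simp

lemma pd3₂_comm {f : E3 → ℝ} (hf : ContDiff ℝ (↑(⊤:ℕ∞)) f) (k l : Fin 3) :
    pd3₂ f k l = pd3₂ f l k := by
  funext x
  rw [pd3_eq_snd hf, pd3_eq_snd hf]
  have h1 : ContDiff ℝ (↑(⊤:ℕ∞)) (fderiv ℝ f) := (contDiff_infty_iff_fderiv.mp hf).2
  exact second_derivative_symmetric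
    (f' := fderiv ℝ f)
    (fun y => ((hf.differentiable (by simp)) y).hasFDerivAt)
    ((h1.differentiable (by simp) x).hasFDerivAt) _ _

lemma pd3_congr {f g : E3 → ℝ} (h : ∀ x, f x = g x) (k : Fin 3) (x : E3) :
    pd3 f k x = pd3 g k x := by
  unfold pd3; congr 1; exact funext h ▸ rfl

lemma pd3_sum {ι : Type*} (s : Finset ι) (f : ι → E3 → ℝ)
    (hf : ∀ i ∈ s, ContDiff ℝ (↑(⊤:ℕ∞)) (f i)) (k : Fin 3) (x : E3) :
    pd3 (fun y => ∑ i ∈ s, f i y) k x = ∑ i ∈ s, pd3 (f i) k x := by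
  unfold pd3
  rw [fderiv_fun_sum (fun i hi => (hf i hi).differentiable (by simp) x)]
  simp

lemma pd3_const_zero (k : Fin 3) (x : E3) : pd3 (fun _ => (0:ℝ)) k x = 0 := by
  unfold pd3; rw [fderiv_fun_const]; simp

lemma pd3_mul {f g : E3 → ℝ} (hf : ContDiff ℝ (↑(⊤:ℕ∞)) f)
    (hg : ContDiff ℝ (↑(⊤:ℕ∞)) g) (k : Fin 3) (x : E3) :
    pd3 (fun y => f y * g y) k x = pd3 f k x * g x + f x * pd3 g k x := by
  unfold pd3
  rw [fderiv_fun_mul (hf.differentiable (by simp) x) (hg.differentiable (by simp) x)]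
  simp only [ContinuousLinearMap.add_apply, ContinuousLinearMap.smul_apply, smul_eq_mul]
  ring

lemma per_mul {f g : E3 → ℝ} (hf : Per f) (hg : Per g) : Per (fun y => f y * g y) :=
  fun x k => by simp [hf x k, hg x k]

lemma integral_pd3_eq_zero {h : E3 → ℝ} (hh : ContDiff ℝ (↑(⊤:ℕ∞)) h) (hp : Per h)
    (k : Fin 3) :
    ∫ x in Icc (0 : E3) 1, pd3 h k x = 0 := by
  have hd := hh.differentiable (by simp)
  have key := MeasureTheory.integral_divergence_of_hasFDerivAt_off_countable'
    (n := 2) (0 : E3) 1 (by intro i; norm_num)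
    (fun i x => if i = k then h x else 0)
    (fun i x => if i = k then fderiv ℝ h x else 0)
    ∅ Set.countable_empty
    (by
      intro i
      by_cases hik : i = k <;> simp [hik, (hh.continuous).continuousOn, continuousOn_const])
    (by
      intro x _ i
      by_cases hik : i = k <;> simp [hik, (hd x).hasFDerivAt, hasFDerivAt_const])
    (by
      have : Continuous fun x : E3 => ∑ i : Fin 3,
          (if i = k then fderiv ℝ h x else 0) (Pi.single i 1) := by
        apply continuous_finset_sum
        intro i _
        by_cases hik : i = k
        · subst hik
          simp; exact (contDiff_pd3 hh i).continuous
        · simp only [hik, if_false]; exact continuous_const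
      exact this.continuousOn.integrableOn_compact isCompact_Icc)
  have hlhs : (∫ x in Icc (0:E3) 1, ∑ i : Fin 3,
      (if i = k then fderiv ℝ h x else 0) (Pi.single i 1)) = ∫ x in Icc (0:E3) 1, pd3 h k x := by
    congr 1; funext x
    rw [Finset.sum_eq_single k] <;> simp +contextual [pd3]
  rw [hlhs] at key
  rw [key]
  apply Finset.sum_eq_zero
  intro i _
  by_cases hik : i = k
  case neg => simp [hik]
  subst hik
  have hins : ∀ (y : Fin 2 → ℝ),
      h (Fin.insertNth (α := fun _ => ℝ) i 1 y) = h (Fin.insertNth (α := fun _ => ℝ) i 0 y) := by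
    intro y
    have heq : Fin.insertNth (α := fun _ => ℝ) i 1 y
        = Fin.insertNth (α := fun _ => ℝ) i 0 y + Pi.single i 1 := by
      funext j
      rcases eq_or_ne j i with rfl | hji
      · simp [Fin.insertNth_apply_same]
      · obtain ⟨m, rfl⟩ := Fin.exists_succAbove_eq hji
        simp [Fin.insertNth_apply_succAbove, Pi.single_eq_of_ne (Fin.succAbove_ne i m)]
    rw [heq, hp]
  simp [hins]

lemma cIntOn {f : E3 → ℝ} (hf : Continuous f) : IntegrableOn f (Icc (0:E3) 1) :=
  hf.continuousOn.integrableOn_compact isCompact_Icc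

lemma ibp1 {f g : E3 → ℝ} (hf : ContDiff ℝ (↑(⊤:ℕ∞)) f) (hg : ContDiff ℝ (↑(⊤:ℕ∞)) g)
    (pf : Per f) (pg : Per g) (k : Fin 3) :
    ∫ x in Icc (0:E3) 1, pd3 f k x * g x = -∫ x in Icc (0:E3) 1, f x * pd3 g k x := by
  have hfg : ContDiff ℝ (↑(⊤:ℕ∞)) (fun y => f y * g y) := hf.mul hg
  have h0 := integral_pd3_eq_zero hfg (per_mul pf pg) k
  have hsum : ∫ x in Icc (0:E3) 1, (pd3 f k x * g x + f x * pd3 g k x) = 0 := by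
    rw [← h0]
    exact setIntegral_congr_fun measurableSet_Icc (fun x _ => (pd3_mul hf hg k x).symm)
  have hint1 : IntegrableOn (fun x => pd3 f k x * g x) (Icc (0:E3) 1) :=
    cIntOn (((contDiff_pd3 hf k).continuous).mul hg.continuous)
  have hint2 : IntegrableOn (fun x => f x * pd3 g k x) (Icc (0:E3) 1) :=
    cIntOn ((hf.continuous).mul (contDiff_pd3 hg k).continuous)
  rw [integral_add hint1 hint2] at hsum
  linarith

lemma third_comm {v : E3 → ℝ} (hv : ContDiff ℝ (↑(⊤:ℕ∞)) v) (k l : Fin 3) :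
    pd3 (pd3₂ v l l) k = pd3 (pd3 (pd3 v k) l) l := by
  have h1 : pd3 (pd3₂ v l l) k = pd3₂ (pd3 v l) k l := rfl
  rw [h1, pd3₂_comm (contDiff_pd3 hv l) k l]
  show pd3 (pd3 (pd3 v l) k) l = _
  have h2 : pd3 (pd3 v l) k = pd3 (pd3 v k) l := by
    show pd3₂ v k l = pd3₂ v l k
    exact pd3₂_comm hv k l
  rw [h2]

lemma keyswap {u v : E3 → ℝ} (hu : ContDiff ℝ (↑(⊤:ℕ∞)) u) (hv : ContDiff ℝ (↑(⊤:ℕ∞)) v)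
    (pu : Per u) (pv : Per v) (k j l : Fin 3) :
    ∫ x in Icc (0:E3) 1, pd3₂ u k j x * pd3₂ v l l x
      = ∫ x in Icc (0:E3) 1, pd3₂ u l j x * pd3₂ v l k x := by
  have huj : ContDiff ℝ (↑(⊤:ℕ∞)) (pd3 u j) := contDiff_pd3 hu j
  have puj : Per (pd3 u j) := per_pd3 hu pu j
  have hvll : ContDiff ℝ (↑(⊤:ℕ∞)) (pd3₂ v l l) := contDiff_pd3₂ hv l l
  have pvll : Per (pd3₂ v l l) := per_pd3 (contDiff_pd3 hv l) (per_pd3 hv pv l) l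
  have hL : ∫ x in Icc (0:E3) 1, pd3₂ u k j x * pd3₂ v l l x
      = -∫ x in Icc (0:E3) 1, pd3 u j x * pd3 (pd3₂ v l l) k x :=
    ibp1 huj hvll puj pvll k
  have hvkl : ContDiff ℝ (↑(⊤:ℕ∞)) (pd3 (pd3 v k) l) :=
    contDiff_pd3 (contDiff_pd3 hv k) l
  have pvkl : Per (pd3 (pd3 v k) l) := per_pd3 (contDiff_pd3 hv k) (per_pd3 hv pv k) l
  have hR : ∫ x in Icc (0:E3) 1, pd3₂ u l j x * pd3₂ v l k x
      = -∫ x in Icc (0:E3) 1, pd3 u j x * pd3 (pd3 (pd3 v k) l) l x :=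
    ibp1 huj hvkl puj pvkl l
  rw [hL, hR, third_comm hv k l]

lemma intSum {ι : Type*} [Fintype ι] (G : ι → E3 → ℝ) (hG : ∀ i, Continuous (G i)) :
    ∫ x in Icc (0:E3) 1, ∑ i, G i x = ∑ i, ∫ x in Icc (0:E3) 1, G i x :=
  integral_finset_sum _ (fun i _ => cIntOn (hG i))

lemma intSum4 (G : Fin 3 → Fin 3 → Fin 3 → Fin 3 → E3 → ℝ)
    (hG : ∀ a b c d, Continuous (G a b c d)) :
    ∫ x in Icc (0:E3) 1, ∑ a, ∑ b, ∑ c, ∑ d, G a b c d x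
      = ∑ a, ∑ b, ∑ c, ∑ d, ∫ x in Icc (0:E3) 1, G a b c d x := by
  have h3 : ∀ a b c, Continuous fun x => ∑ d, G a b c d x :=
    fun a b c => continuous_finset_sum _ fun d _ => hG a b c d
  have h2 : ∀ a b, Continuous fun x => ∑ c, ∑ d, G a b c d x :=
    fun a b => continuous_finset_sum _ fun c _ => h3 a b c
  have h1 : ∀ a, Continuous fun x => ∑ b, ∑ c, ∑ d, G a b c d x :=
    fun a => continuous_finset_sum _ fun b _ => h2 a b
  rw [intSum _ h1]
  refine Finset.sum_congr rfl fun a _ => ?_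
  rw [intSum _ (h2 a)]
  refine Finset.sum_congr rfl fun b _ => ?_
  rw [intSum _ (h3 a b)]
  exact Finset.sum_congr rfl fun c _ => intSum _ (hG a b c)

lemma prod_int_le {u v : E3 → ℝ} (hu : Continuous u) (hv : Continuous v) :
    ∫ x in Icc (0:E3) 1, u x * v x
      ≤ (1/2) * (∫ x in Icc (0:E3) 1, u x ^ 2) + (1/2) * (∫ x in Icc (0:E3) 1, v x ^ 2) := by
  have hle : ∀ x ∈ Icc (0:E3) 1, u x * v x ≤ (1/2) * u x ^ 2 + (1/2) * v x ^ 2 :=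
    fun x _ => by nlinarith [sq_nonneg (u x - v x)]
  have h2 := setIntegral_mono_on (cIntOn (hu.mul hv))
    (cIntOn (((continuous_const.mul (hu.pow 2)).add (continuous_const.mul (hv.pow 2)))))
    measurableSet_Icc hle
  calc ∫ x in Icc (0:E3) 1, u x * v x
      ≤ ∫ x in Icc (0:E3) 1, ((1/2) * u x ^ 2 + (1/2) * v x ^ 2) := h2
    _ = (1/2) * (∫ x in Icc (0:E3) 1, u x ^ 2) + (1/2) * (∫ x in Icc (0:E3) 1, v x ^ 2) := by
        rw [integral_add (cIntOn (continuous_const.fun_mul (hu.fun_pow 2)))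
          (cIntOn (continuous_const.fun_mul (hv.fun_pow 2))), MeasureTheory.integral_const_mul, MeasureTheory.integral_const_mul]

lemma neg_prod_int_le {u v : E3 → ℝ} (hu : Continuous u) (hv : Continuous v) :
    -(∫ x in Icc (0:E3) 1, u x * v x)
      ≤ (1/2) * (∫ x in Icc (0:E3) 1, u x ^ 2) + (1/2) * (∫ x in Icc (0:E3) 1, v x ^ 2) := by
  have := prod_int_le hu.fun_neg hv
  rw [show (∫ x in Icc (0:E3) 1, -u x * v x) = ∫ x in Icc (0:E3) 1, -(u x * v x) by
        congr 1; funext x; ring,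
      integral_neg] at this
  simpa using this

/-- Coercivity bounds for the elastic operator `∂G(P)`:
`2(L₁-|L₂+L₃|)‖ΔP‖² ≤ ⟨-∂G(P), ΔP⟩ ≤ 2(L₁+|L₂+L₃|)‖ΔP‖²` on the flat 3-torus. -/
theorem elastic_operator_coercivity
    (L₁ L₂ L₃ : ℝ)
    (P : (Fin 3 → ℝ) → Fin 3 → Fin 3 → ℝ)
    (hsmooth : ∀ i j, ContDiff ℝ (⊤ : ℕ∞) fun x => P x i j)
    (hper : ∀ (x : Fin 3 → ℝ) (k : Fin 3) (i j : Fin 3),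
      P (x + Pi.single k 1) i j = P x i j)
    (hsymm : ∀ x i j, P x i j = P x j i)
    (htrace : ∀ x, ∑ i, P x i i = 0)
    -- the Laplacian of the components of `P`
    (lap : Fin 3 → Fin 3 → (Fin 3 → ℝ) → ℝ)
    (hlap : ∀ i j x, lap i j x = ∑ k, pd3₂ (fun y => P y i j) k k x)
    -- the elastic operator `∂G(P)`
    (dG : Fin 3 → Fin 3 → (Fin 3 → ℝ) → ℝ)
    (hdG : ∀ i j x, dG i j x =
      -2 * L₁ * lap i j x
        - 2 * (L₂ + L₃) * (∑ k, pd3₂ (fun y => P y i k) k j x)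
        + (2 / 3) * (L₂ + L₃) * (∑ l, ∑ k, pd3₂ (fun y => P y k l) l k x)
            * (if i = j then 1 else 0)) :
    2 * (L₁ - |L₂ + L₃|) *
        (∫ x in Set.Icc (0 : Fin 3 → ℝ) 1, ∑ i, ∑ j, (lap i j x) ^ 2) ≤
      (∫ x in Set.Icc (0 : Fin 3 → ℝ) 1, ∑ i, ∑ j, (-(dG i j x)) * lap i j x)
    ∧ (∫ x in Set.Icc (0 : Fin 3 → ℝ) 1, ∑ i, ∑ j, (-(dG i j x)) * lap i j x) ≤
      2 * (L₁ + |L₂ + L₃|) *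
        (∫ x in Set.Icc (0 : Fin 3 → ℝ) 1, ∑ i, ∑ j, (lap i j x) ^ 2) := by
  have hs : ∀ i j, ContDiff ℝ (↑(⊤:ℕ∞)) (fun x => P x i j) :=
    fun i j => (hsmooth i j).of_le (by simp)
  have hp : ∀ i j, Per (fun x => P x i j) := fun i j x k => hper x k i j
  have hD2c : ∀ i j k l, Continuous (pd3₂ (fun y => P y i j) k l) :=
    fun i j k l => (contDiff_pd3₂ (hs i j) k l).continuous
  have hlapc : ∀ i j, Continuous (lap i j) := by
    intro i j
    have he : lap i j = fun x => ∑ k, pd3₂ (fun y => P y i j) k k x :=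
      funext (hlap i j)
    rw [he]; exact continuous_finset_sum _ fun k _ => hD2c i j k k
  -- trace of lap is zero
  have htr : ∀ x, ∑ i, lap i i x = 0 := by
    intro x
    calc ∑ i, lap i i x = ∑ i, ∑ k, pd3₂ (fun y => P y i i) k k x :=
          Finset.sum_congr rfl (fun i _ => hlap i i x)
      _ = ∑ k, ∑ i, pd3₂ (fun y => P y i i) k k x := Finset.sum_comm
      _ = 0 := by
        apply Finset.sum_eq_zero
        intro k _
        have e1 : ∀ y : E3, ∑ i, pd3 (fun z => P z i i) k y = 0 := by
          intro y
          rw [← pd3_sum Finset.univ _ (fun i _ => hs i i) k y]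
          calc pd3 (fun z => ∑ i, P z i i) k y = pd3 (fun _ => (0:ℝ)) k y :=
                pd3_congr (fun z => htrace z) k y
            _ = 0 := pd3_const_zero k y
        calc ∑ i, pd3₂ (fun y => P y i i) k k x
            = pd3 (fun y => ∑ i, pd3 (fun z => P z i i) k y) k x :=
              (pd3_sum Finset.univ _ (fun i _ => contDiff_pd3 (hs i i) k) k x).symm
          _ = pd3 (fun _ => (0:ℝ)) k x := pd3_congr e1 k x
          _ = 0 := pd3_const_zero k x
  set c : ℝ := L₂ + L₃ with hc
  set IA : ℝ := ∫ x in Set.Icc (0 : Fin 3 → ℝ) 1, ∑ i, ∑ j, (lap i j x) ^ 2 with hIA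
  set IB : ℝ := ∫ x in Set.Icc (0 : Fin 3 → ℝ) 1,
    ∑ i, ∑ j, (∑ k, pd3₂ (fun y => P y i k) k j x) * lap i j x with hIB
  -- main decomposition
  have hmain : (∫ x in Set.Icc (0 : Fin 3 → ℝ) 1, ∑ i, ∑ j, (-(dG i j x)) * lap i j x)
      = 2 * L₁ * IA + 2 * c * IB := by
    have hpoint : ∀ x, ∑ i, ∑ j, (-(dG i j x)) * lap i j x
        = 2 * L₁ * (∑ i, ∑ j, (lap i j x) ^ 2)
          + 2 * c * (∑ i, ∑ j, (∑ k, pd3₂ (fun y => P y i k) k j x) * lap i j x) := by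
      intro x
      have e1 : ∀ i j, (-(dG i j x)) * lap i j x
          = 2 * L₁ * (lap i j x) ^ 2
            + 2 * c * ((∑ k, pd3₂ (fun y => P y i k) k j x) * lap i j x)
            - ((2/3) * c * (∑ l, ∑ k, pd3₂ (fun y => P y k l) l k x))
                * ((if i = j then (1:ℝ) else 0) * lap i j x) := by
        intro i j; rw [hdG i j x]; ring
      calc ∑ i, ∑ j, (-(dG i j x)) * lap i j x
          = ∑ i, ∑ j, (2 * L₁ * (lap i j x) ^ 2
            + 2 * c * ((∑ k, pd3₂ (fun y => P y i k) k j x) * lap i j x)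
            - ((2/3) * c * (∑ l, ∑ k, pd3₂ (fun y => P y k l) l k x))
                * ((if i = j then (1:ℝ) else 0) * lap i j x)) :=
            Finset.sum_congr rfl fun i _ => Finset.sum_congr rfl fun j _ => e1 i j
        _ = 2 * L₁ * (∑ i, ∑ j, (lap i j x) ^ 2)
            + 2 * c * (∑ i, ∑ j, (∑ k, pd3₂ (fun y => P y i k) k j x) * lap i j x)
            - ((2/3) * c * (∑ l, ∑ k, pd3₂ (fun y => P y k l) l k x))
                * (∑ i, lap i i x) := by
            simp only [Finset.sum_sub_distrib, Finset.sum_add_distrib, ← Finset.mul_sum]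
            congr 1
            congr 1
            apply Finset.sum_congr rfl
            intro i _
            congr 1
            simp
        _ = _ := by rw [htr x]; ring
    rw [setIntegral_congr_fun measurableSet_Icc (fun x _ => hpoint x)]
    have hA : Continuous fun x => ∑ i, ∑ j, (lap i j x) ^ 2 :=
      continuous_finset_sum _ fun i _ => continuous_finset_sum _ fun j _ => (hlapc i j).pow 2
    have hB : Continuous fun x => ∑ i, ∑ j, (∑ k, pd3₂ (fun y => P y i k) k j x) * lap i j x :=
      continuous_finset_sum _ fun i _ => continuous_finset_sum _ fun j _ =>
        (continuous_finset_sum _ fun k _ => hD2c i k k j).mul (hlapc i j)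
    rw [integral_add (cIntOn (continuous_const.fun_mul hA)) (cIntOn (continuous_const.fun_mul hB)),
      MeasureTheory.integral_const_mul, MeasureTheory.integral_const_mul]
  -- expansion of IB and IA into fourfold sums
  have hQc : ∀ i j, Continuous fun x => ∑ k, pd3₂ (fun y => P y i k) k j x :=
    fun i j => continuous_finset_sum _ fun k _ => hD2c i k k j
  set S : ℝ := ∑ i : Fin 3, ∑ j : Fin 3, ∑ k : Fin 3, ∑ l : Fin 3,
    ∫ x in Icc (0:E3) 1, (pd3₂ (fun y => P y i j) l k x) ^ 2 with hS
  have hIBswap : IB = ∑ i : Fin 3, ∑ j : Fin 3, ∑ k : Fin 3, ∑ l : Fin 3,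
      ∫ x in Icc (0:E3) 1,
        pd3₂ (fun y => P y i k) l j x * pd3₂ (fun y => P y i j) l k x := by
    have hpt : ∀ x, ∑ i, ∑ j, (∑ k, pd3₂ (fun y => P y i k) k j x) * lap i j x
        = ∑ i, ∑ j, ∑ k, ∑ l,
            pd3₂ (fun y => P y i k) k j x * pd3₂ (fun y => P y i j) l l x := by
      intro x
      refine Finset.sum_congr rfl fun i _ => Finset.sum_congr rfl fun j _ => ?_
      rw [hlap i j x, Finset.sum_mul_sum]
    rw [hIB, setIntegral_congr_fun measurableSet_Icc (fun x _ => hpt x),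
      intSum4 _ (fun i j k l => (hD2c i k k j).fun_mul (hD2c i j l l))]
    exact Finset.sum_congr rfl fun i _ => Finset.sum_congr rfl fun j _ =>
      Finset.sum_congr rfl fun k _ => Finset.sum_congr rfl fun l _ =>
        keyswap (hs i k) (hs i j) (hp i k) (hp i j) k j l
  have hAS : (∑ i : Fin 3, ∑ j : Fin 3, ∑ k : Fin 3, ∑ l : Fin 3,
      ∫ x in Icc (0:E3) 1, (pd3₂ (fun y => P y i k) l j x) ^ 2) = S := by
    rw [hS]
    exact Finset.sum_congr rfl fun i _ => Finset.sum_comm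
  have hsplit : ∀ (A B : Fin 3 → Fin 3 → Fin 3 → Fin 3 → ℝ),
      (∑ i : Fin 3, ∑ j : Fin 3, ∑ k : Fin 3, ∑ l : Fin 3,
        ((1/2) * A i j k l + (1/2) * B i j k l))
      = (1/2) * (∑ i : Fin 3, ∑ j : Fin 3, ∑ k : Fin 3, ∑ l : Fin 3, A i j k l)
        + (1/2) * (∑ i : Fin 3, ∑ j : Fin 3, ∑ k : Fin 3, ∑ l : Fin 3, B i j k l) := by
    intro A B
    simp only [Finset.sum_add_distrib, ← Finset.mul_sum]
  have hIBS_le : IB ≤ S := by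
    rw [hIBswap]
    calc (∑ i : Fin 3, ∑ j : Fin 3, ∑ k : Fin 3, ∑ l : Fin 3,
        ∫ x in Icc (0:E3) 1,
          pd3₂ (fun y => P y i k) l j x * pd3₂ (fun y => P y i j) l k x)
        ≤ ∑ i : Fin 3, ∑ j : Fin 3, ∑ k : Fin 3, ∑ l : Fin 3,
            ((1/2) * (∫ x in Icc (0:E3) 1, (pd3₂ (fun y => P y i k) l j x) ^ 2)
              + (1/2) * (∫ x in Icc (0:E3) 1, (pd3₂ (fun y => P y i j) l k x) ^ 2)) :=
          Finset.sum_le_sum fun i _ => Finset.sum_le_sum fun j _ =>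
            Finset.sum_le_sum fun k _ => Finset.sum_le_sum fun l _ =>
              prod_int_le (hD2c i k l j) (hD2c i j l k)
      _ = S := by rw [hsplit, hAS, ← hS]; ring
  have hIBS_ge : -IB ≤ S := by
    rw [hIBswap]
    have hneg : -(∑ i : Fin 3, ∑ j : Fin 3, ∑ k : Fin 3, ∑ l : Fin 3,
        ∫ x in Icc (0:E3) 1,
          pd3₂ (fun y => P y i k) l j x * pd3₂ (fun y => P y i j) l k x)
        = ∑ i : Fin 3, ∑ j : Fin 3, ∑ k : Fin 3, ∑ l : Fin 3,
          -(∫ x in Icc (0:E3) 1,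
            pd3₂ (fun y => P y i k) l j x * pd3₂ (fun y => P y i j) l k x) := by
      simp only [← Finset.sum_neg_distrib]
    rw [hneg]
    calc (∑ i : Fin 3, ∑ j : Fin 3, ∑ k : Fin 3, ∑ l : Fin 3,
        -(∫ x in Icc (0:E3) 1,
          pd3₂ (fun y => P y i k) l j x * pd3₂ (fun y => P y i j) l k x))
        ≤ ∑ i : Fin 3, ∑ j : Fin 3, ∑ k : Fin 3, ∑ l : Fin 3,
            ((1/2) * (∫ x in Icc (0:E3) 1, (pd3₂ (fun y => P y i k) l j x) ^ 2)
              + (1/2) * (∫ x in Icc (0:E3) 1, (pd3₂ (fun y => P y i j) l k x) ^ 2)) :=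
          Finset.sum_le_sum fun i _ => Finset.sum_le_sum fun j _ =>
            Finset.sum_le_sum fun k _ => Finset.sum_le_sum fun l _ =>
              neg_prod_int_le (hD2c i k l j) (hD2c i j l k)
      _ = S := by rw [hsplit, hAS, ← hS]; ring
  have hIAS : IA = S := by
    have hpt : ∀ x, ∑ i, ∑ j, (lap i j x) ^ 2
        = ∑ i, ∑ j, ∑ k, ∑ l,
            pd3₂ (fun y => P y i j) k k x * pd3₂ (fun y => P y i j) l l x := by
      intro x
      refine Finset.sum_congr rfl fun i _ => Finset.sum_congr rfl fun j _ => ?_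
      rw [hlap i j x, sq, Finset.sum_mul_sum]
    rw [hIA, setIntegral_congr_fun measurableSet_Icc (fun x _ => hpt x),
      intSum4 _ (fun i j k l => (hD2c i j k k).fun_mul (hD2c i j l l)), hS]
    refine Finset.sum_congr rfl fun i _ => Finset.sum_congr rfl fun j _ =>
      Finset.sum_congr rfl fun k _ => Finset.sum_congr rfl fun l _ => ?_
    rw [keyswap (hs i j) (hs i j) (hp i j) (hp i j) k k l]
    refine setIntegral_congr_fun measurableSet_Icc fun x _ => ?_
    ring
  have hIA0 : 0 ≤ IA := by
    apply setIntegral_nonneg measurableSet_Icc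
    intro x _; positivity
  rw [hmain]
  constructor
  · nlinarith [neg_abs_le c, le_abs_self c, abs_nonneg c]
  · nlinarith [neg_abs_le c, le_abs_self c, abs_nonneg c]
end

section
/- Let H be a real Hilbert space and let a, b ∈ H be nonzero with ⟨a, -c⟩ ≥ θ‖a‖‖c‖ for θ = (L₁-|L₂+L₃|)/(L₁+|L₂+L₃|) > 0 and ⟨b, -c⟩ ≥ 0 for some nonzero c ∈ H. Then ⟨a, b⟩ ≥ -sin(arccos θ)·‖a‖‖b‖; in particular with θ as above, ⟨a, b⟩ ≥ -(2√(L₁|L₂+L₃|)/(L₁+|L₂+L₃|))‖a‖‖b‖. -/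
/-!
Let `u = -c`. The hypotheses bound the angles: `∠(a, u) ≤ arccos θ` and `∠(u, b) ≤ π / 2`, so by
the triangle inequality for angles `∠(a, b) ≤ arccos θ + π / 2 ≤ π`. Since `cos` is antitone on
`[0, π]`, `cos ∠(a, b) ≥ cos (arccos θ + π / 2) = -sin (arccos θ) = -√(1 - θ²)`, and for
`θ = (L - s) / (L + s)` one has `1 - θ² = 4 L s / (L + s)²`.
-/

open Real InnerProductGeometry

section

variable {V : Type*} [NormedAddCommGroup V] [InnerProductSpace ℝ V]

lemma angle_le_arccos_of_mul_norm_mul_norm_le_inner {x y : V} (hx : x ≠ 0) (hy : y ≠ 0)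
    {θ : ℝ} (h : θ * ‖x‖ * ‖y‖ ≤ inner ℝ x y) : angle x y ≤ arccos θ := by
  refine arccos_le_arccos ?_
  rw [le_div_iff₀ (by positivity), ← mul_assoc]
  exact h

lemma angle_le_pi_div_two_of_inner_nonneg {x y : V} (h : 0 ≤ inner ℝ x y) :
    angle x y ≤ π / 2 :=
  arccos_le_pi_div_two.2 (div_nonneg h (by positivity))

lemma neg_sin_arccos_mul_norm_mul_norm_le_inner {a b u : V} (ha : a ≠ 0) (hu : u ≠ 0)
    {θ : ℝ} (hθ : 0 ≤ θ) (hau : θ * ‖a‖ * ‖u‖ ≤ inner ℝ a u) (hbu : 0 ≤ inner ℝ b u) :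
    -sin (arccos θ) * ‖a‖ * ‖b‖ ≤ inner ℝ a b := by
  have hab : angle a b ≤ arccos θ + π / 2 :=
    calc angle a b ≤ angle a u + angle u b := angle_le_angle_add_angle a u b
      _ ≤ arccos θ + π / 2 := add_le_add
          (angle_le_arccos_of_mul_norm_mul_norm_le_inner ha hu hau)
          (angle_comm b u ▸ angle_le_pi_div_two_of_inner_nonneg hbu)
  have hcos : -sin (arccos θ) ≤ cos (angle a b) := by
    rw [← cos_add_pi_div_two]
    refine cos_le_cos_of_nonneg_of_le_pi (angle_nonneg a b) ?_ hab
    linarith [arccos_le_pi_div_two.2 hθ]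
  rw [← cos_angle_mul_norm_mul_norm, mul_assoc]
  exact mul_le_mul_of_nonneg_right hcos (by positivity)

end

lemma sqrt_one_sub_sq_div_add {L s : ℝ} (hL : 0 ≤ L) (hs : 0 ≤ s) (hLs : 0 < L + s) :
    √(1 - ((L - s) / (L + s)) ^ 2) = 2 * √(L * s) / (L + s) := by
  have h : 1 - ((L - s) / (L + s)) ^ 2 = (2 * √(L * s) / (L + s)) ^ 2 := by
    rw [div_pow, div_pow, mul_pow, sq_sqrt (mul_nonneg hL hs)]
    field_simp
    ring
  rw [h, sqrt_sq (by positivity)]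

theorem inner_lower_bound_of_angles_general
    {H : Type*} [NormedAddCommGroup H] [InnerProductSpace ℝ H]
    (L₁ L₂ L₃ : ℝ) (hL : L₁ > 3 * |L₂ + L₃|)
    (θ : ℝ) (hθ : θ = (L₁ - |L₂ + L₃|) / (L₁ + |L₂ + L₃|))
    (a b c : H) (ha : a ≠ 0) (hc : c ≠ 0)
    (hac : (inner ℝ a (-c) : ℝ) ≥ θ * ‖a‖ * ‖c‖)
    (hbc : (inner ℝ b (-c) : ℝ) ≥ 0) :
    (inner ℝ a b : ℝ) ≥ -Real.sin (Real.arccos θ) * ‖a‖ * ‖b‖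
      ∧ (inner ℝ a b : ℝ) ≥
        -(2 * Real.sqrt (L₁ * |L₂ + L₃|) / (L₁ + |L₂ + L₃|)) * ‖a‖ * ‖b‖ := by
  have hs : 0 ≤ |L₂ + L₃| := abs_nonneg _
  have hθ0 : 0 ≤ θ := hθ ▸ div_nonneg (by linarith) (by linarith)
  have hbound := neg_sin_arccos_mul_norm_mul_norm_le_inner ha (neg_ne_zero.2 hc) hθ0
    (by rwa [norm_neg]) hbc
  refine ⟨hbound, ?_⟩
  rwa [sin_arccos, hθ, sqrt_one_sub_sq_div_add (by linarith) hs (by linarith)] at hbound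

/-- Angle-based lower bound for an inner product: if `⟨a,-c⟩ ≥ θ‖a‖‖c‖` with
`θ = (L₁-|L₂+L₃|)/(L₁+|L₂+L₃|)` and `⟨b,-c⟩ ≥ 0`, then
`⟨a,b⟩ ≥ -sin(arccos θ)‖a‖‖b‖ = -(2√(L₁|L₂+L₃|)/(L₁+|L₂+L₃|))‖a‖‖b‖`. -/
theorem inner_lower_bound_of_angles
    {H : Type*} [NormedAddCommGroup H] [InnerProductSpace ℝ H]
    (L₁ L₂ L₃ : ℝ) (hL : L₁ > 3 * |L₂ + L₃|) (hL' : 0 < |L₂ + L₃|)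
    (θ : ℝ) (hθ : θ = (L₁ - |L₂ + L₃|) / (L₁ + |L₂ + L₃|))
    (a b c : H) (ha : a ≠ 0) (hb : b ≠ 0) (hc : c ≠ 0)
    (hac : (inner ℝ a (-c) : ℝ) ≥ θ * ‖a‖ * ‖c‖)
    (hbc : (inner ℝ b (-c) : ℝ) ≥ 0) :
    (inner ℝ a b : ℝ) ≥ -Real.sin (Real.arccos θ) * ‖a‖ * ‖b‖
      ∧ (inner ℝ a b : ℝ) ≥
        -(2 * Real.sqrt (L₁ * |L₂ + L₃|) / (L₁ + |L₂ + L₃|)) * ‖a‖ * ‖b‖ :=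
  inner_lower_bound_of_angles_general L₁ L₂ L₃ hL θ hθ a b c ha hc hac hbc
end
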